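/- (Multiple symmetric exchange property.) For every matroid M, every pair of bases B₁, B₂ of M, and every subset A₁ ⊆ B₁, there exists a subset A₂ ⊆ B₂ such that both (B₁ \ A₁) ∪ A₂ and (B₂ \ A₂) ∪ A₁ are bases of M. -/

import Mathlib

/-!
Write `P = B₁ \ A₁` and `n` for the rank of `M`. For every `X ⊆ B₂`, submodularity of the rank
function gives `r(P ∪ X) + r(A₁ ∪ X) ≥ r(B₁ ∪ X) + r(X) = n + |X|`, i.e.
`r(P ∪ X) + r(A₁ ∪ X) + |B₂ \ X| ≥ 2n`. A partition lemma for two submodular functions, proved by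
sending the elements of `B₂` one at a time to one of the two sides, turns this into a split
`B₂ = T ∪ (B₂ \ T)` with `r(P ∪ T) + r(A₁ ∪ (B₂ \ T)) ≥ 2n`, so both `P ∪ T` and `A₁ ∪ (B₂ \ T)`
span `M`. Extending `P` to a base inside `P ∪ T` produces `A₂ ⊆ T` with `|A₂| = |A₁|`; then
`(B₂ \ A₂) ∪ A₁` contains the spanning set `A₁ ∪ (B₂ \ T)` and has only `n` elements.
-/

open Set

def Submodular {α : Type*} (f : Set α → ℕ) : Prop :=
  ∀ X Y, f (X ∪ Y) + f (X ∩ Y) ≤ f X + f Y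

lemma Set.ncard_sdiff_add_ncard_sdiff {α : Type*} {S : Set α} (hS : S.Finite) (X Y : Set α) :
    (S \ X).ncard + (S \ Y).ncard = (S \ (X ∪ Y)).ncard + (S \ (X ∩ Y)).ncard := by
  have := ncard_union_add_ncard_inter (S \ X) (S \ Y) (hS.subset sdiff_subset)
    (hS.subset sdiff_subset)
  rw [← sdiff_inter, sdiff_inter_sdiff] at this
  omega

namespace Submodular

variable {α : Type*} {f g : Set α → ℕ}

lemma comp_union (hf : Submodular f) (P : Set α) : Submodular (fun X ↦ f (P ∪ X)) := by
  intro X Y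
  dsimp only
  rw [union_union_distrib_left, union_inter_distrib_left]
  exact hf _ _

lemma comp_insert (hf : Submodular f) (a : α) : Submodular (fun X ↦ f (insert a X)) := by
  simpa only [singleton_union] using hf.comp_union {a}

theorem exists_subset_le_add_sdiff (hf : Submodular f) (hg : Submodular g) {S : Set α}
    (hS : S.Finite) {k : ℕ} (h : ∀ X ⊆ S, k ≤ f X + g X + (S \ X).ncard) :
    ∃ T ⊆ S, k ≤ f T + g (S \ T) := by
  induction S, hS using Set.Finite.induction_on generalizing f g with
  | empty => exact ⟨∅, empty_subset _, by simpa using h ∅ (empty_subset _)⟩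
  | @insert a S ha hS ih =>
    have insert_sdiff_insert (X : Set α) : insert a S \ insert a X = S \ X := by
      rw [insert_sdiff_of_mem _ (mem_insert a X), sdiff_insert_of_notMem ha]
    by_cases h₁ : ∀ X ⊆ S, k ≤ f (insert a X) + g X + (S \ X).ncard
    · obtain ⟨T, hTS, hT⟩ := ih (hf.comp_insert a) hg h₁
      exact ⟨insert a T, insert_subset_insert hTS, by rwa [insert_sdiff_insert]⟩
    by_cases h₂ : ∀ X ⊆ S, k ≤ f X + g (insert a X) + (S \ X).ncard
    · obtain ⟨T, hTS, hT⟩ := ih hf (hg.comp_insert a) h₂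
      refine ⟨T, hTS.trans (subset_insert a S), ?_⟩
      rwa [insert_sdiff_of_notMem _ (fun haT ↦ ha (hTS haT))]
    -- Adding the two violated inequalities and applying submodularity to `insert a X₁, X₂` and
    -- to `X₁, insert a X₂` bounds the sum of the two instances of `h` at `insert a (X₁ ∪ X₂)`
    -- and `X₁ ∩ X₂` by `2k - 1`.
    push Not at h₁ h₂
    obtain ⟨X₁, hX₁S, hX₁⟩ := h₁
    obtain ⟨X₂, hX₂S, hX₂⟩ := h₂
    have hf₁₂ := hf (insert a X₁) X₂
    have hg₁₂ := hg X₁ (insert a X₂)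
    rw [insert_union, insert_inter_of_notMem (fun h ↦ ha (hX₂S h))] at hf₁₂
    rw [union_insert, inter_insert_of_notMem (fun h ↦ ha (hX₁S h))] at hg₁₂
    have hU := h (insert a (X₁ ∪ X₂)) (insert_subset_insert (union_subset hX₁S hX₂S))
    have hI := h (X₁ ∩ X₂) (inter_subset_left.trans (hX₁S.trans (subset_insert a S)))
    rw [insert_sdiff_insert] at hU
    rw [insert_sdiff_of_notMem _ (fun h ↦ ha (hX₁S h.1)),
      ncard_insert_of_notMem (fun h ↦ ha h.1) (hS.subset sdiff_subset)] at hI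
    have := ncard_sdiff_add_ncard_sdiff hS X₁ X₂
    omega

end Submodular

namespace Matroid

variable {α : Type*} {M : Matroid α} {B B₁ B₂ I X : Set α}

noncomputable def rk (M : Matroid α) (X : Set α) : ℕ := (M.eRk X).toNat

lemma cast_rk [M.RankFinite] (X : Set α) : (M.rk X : ℕ∞) = M.eRk X :=
  ENat.natCast_toNat (eRk_ne_top_iff.2 (M.isRkFinite_set X))

lemma rk_submodular [M.RankFinite] : Submodular M.rk := by
  intro X Y
  rw [← Nat.cast_le (α := ℕ∞)]
  push_cast
  simp only [cast_rk]
  rw [add_comm]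
  exact M.eRk_submod X Y

lemma Indep.ncard_le_rk_of_subset [M.RankFinite] (hI : M.Indep I) (hIX : I ⊆ X) :
    I.ncard ≤ M.rk X := by
  rw [← Nat.cast_le (α := ℕ∞), cast_rk, hI.finite.cast_ncard_eq]
  exact hI.encard_le_eRk_of_subset hIX

lemma IsBase.rk_le_ncard [M.RankFinite] (hB : M.IsBase B) (X : Set α) : M.rk X ≤ B.ncard := by
  rw [← Nat.cast_le (α := ℕ∞), cast_rk, hB.finite.cast_ncard_eq, hB.encard_eq_eRank]
  exact M.eRk_le_eRank X

lemma IsBase.spanning_of_ncard_le_rk [M.RankFinite] (hB : M.IsBase B) (hX : X ⊆ M.E)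
    (h : B.ncard ≤ M.rk X) : M.Spanning X := by
  rw [spanning_iff_eRk_le, ← hB.encard_eq_eRank, ← hB.finite.cast_ncard_eq, ← cast_rk]
  exact_mod_cast h

lemma Spanning.isBase_of_ncard_le (hX : M.Spanning X) (hXfin : X.Finite) (hB : M.IsBase B)
    (h : X.ncard ≤ B.ncard) : M.IsBase X := by
  obtain ⟨B', hB', hB'X⟩ := hX.exists_isBase_subset
  rwa [← eq_of_subset_of_ncard_le hB'X (h.trans (hB.ncard_eq_ncard_of_isBase hB').le) hXfin]

lemma IsBase.ncard_add_ncard_le_rk_add_rk [M.RankFinite] (hB : M.IsBase B) (hI : M.Indep I)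
    {P Q : Set α} (hBPQ : B ⊆ P ∪ Q) : B.ncard + I.ncard ≤ M.rk (P ∪ I) + M.rk (Q ∪ I) := by
  have hunion : B.ncard ≤ M.rk (P ∪ I ∪ (Q ∪ I)) := hB.indep.ncard_le_rk_of_subset
    (hBPQ.trans (union_subset_union subset_union_left subset_union_left))
  have hinter : I.ncard ≤ M.rk ((P ∪ I) ∩ (Q ∪ I)) :=
    hI.ncard_le_rk_of_subset (subset_inter subset_union_right subset_union_right)
  have := M.rk_submodular (P ∪ I) (Q ∪ I)
  omega

lemma exists_symmetric_exchange_of_spanning [M.RankFinite] (hB₁ : M.IsBase B₁)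
    (hB₂ : M.IsBase B₂) {A₁ T : Set α} (hA₁ : A₁ ⊆ B₁) (hT : T ⊆ B₂)
    (h₁ : M.Spanning (B₁ \ A₁ ∪ T)) (h₂ : M.Spanning (A₁ ∪ (B₂ \ T))) :
    ∃ A₂ ⊆ B₂, M.IsBase (B₁ \ A₁ ∪ A₂) ∧ M.IsBase (B₂ \ A₂ ∪ A₁) := by
  obtain ⟨J, hJ, hPJ, hJPT⟩ :=
    (hB₁.indep.subset sdiff_subset).exists_isBase_subset_spanning h₁ subset_union_left
  set A₂ := J \ (B₁ \ A₁)
  have hA₂T : A₂ ⊆ T := fun x hx ↦ (hJPT hx.1).resolve_left hx.2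
  have hA₂B₂ : A₂ ⊆ B₂ := hA₂T.trans hT
  rw [← union_sdiff_cancel hPJ] at hJ
  refine ⟨A₂, hA₂B₂, hJ, ?_⟩
  have hspan : M.Spanning (B₂ \ A₂ ∪ A₁) := by
    refine h₂.superset ?_
      (union_subset (sdiff_subset.trans hB₂.subset_ground) (hA₁.trans hB₁.subset_ground))
    rw [union_comm A₁]
    exact union_subset_union_left _ (sdiff_subset_sdiff_right hA₂T)
  have hcard : A₂.ncard = A₁.ncard := by
    have hJcard : (B₁ \ A₁ ∪ A₂).ncard = (B₁ \ A₁).ncard + A₂.ncard :=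
      ncard_union_eq disjoint_sdiff_right (hB₁.finite.subset sdiff_subset)
        (hB₂.finite.subset hA₂B₂)
    have hJn : (B₁ \ A₁ ∪ A₂).ncard = B₁.ncard := hJ.ncard_eq_ncard_of_isBase hB₁
    have hB₁card : (B₁ \ A₁).ncard + A₁.ncard = B₁.ncard :=
      ncard_sdiff_add_ncard_of_subset hA₁ hB₁.finite
    omega
  refine hspan.isBase_of_ncard_le
    ((hB₂.finite.subset sdiff_subset).union (hB₁.finite.subset hA₁)) hB₁ ?_
  calc (B₂ \ A₂ ∪ A₁).ncard ≤ (B₂ \ A₂).ncard + A₁.ncard := ncard_union_le _ _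
    _ = B₁.ncard := by
      rw [← hcard, ncard_sdiff_add_ncard_of_subset hA₂B₂ hB₂.finite,
        hB₂.ncard_eq_ncard_of_isBase hB₁]

end Matroid

/-- **Multiple symmetric exchange property.**
For every (finite) matroid `M`, every pair of bases `B₁, B₂` of `M`, and every
subset `A₁ ⊆ B₁`, there exists `A₂ ⊆ B₂` such that both `(B₁ \ A₁) ∪ A₂` and
`(B₂ \ A₂) ∪ A₁` are bases of `M`. -/
theorem multiple_symmetric_exchange {α : Type*} (M : Matroid α) (hM : M.Finite)
    (B₁ B₂ : Set α) (hB₁ : M.IsBase B₁) (hB₂ : M.IsBase B₂)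
    (A₁ : Set α) (hA₁ : A₁ ⊆ B₁) :
    ∃ A₂ : Set α, A₂ ⊆ B₂ ∧ M.IsBase ((B₁ \ A₁) ∪ A₂) ∧ M.IsBase ((B₂ \ A₂) ∪ A₁) := by
  have := hM
  have hsplit : ∀ X ⊆ B₂,
      2 * B₁.ncard ≤ M.rk (B₁ \ A₁ ∪ X) + M.rk (A₁ ∪ X) + (B₂ \ X).ncard := fun X hX ↦ by
    have := hB₁.ncard_add_ncard_le_rk_add_rk (hB₂.indep.subset hX)
      (sdiff_union_of_subset hA₁).symm.subset
    have := ncard_sdiff_add_ncard_of_subset hX hB₂.finite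
    have := hB₂.ncard_eq_ncard_of_isBase hB₁
    omega
  obtain ⟨T, hTB₂, hT⟩ := (M.rk_submodular.comp_union (B₁ \ A₁)).exists_subset_le_add_sdiff
    (M.rk_submodular.comp_union A₁) hB₂.finite hsplit
  have h₁ := hB₁.rk_le_ncard (B₁ \ A₁ ∪ T)
  have h₂ := hB₁.rk_le_ncard (A₁ ∪ (B₂ \ T))
  exact M.exists_symmetric_exchange_of_spanning hB₁ hB₂ hA₁ hTB₂
    (hB₁.spanning_of_ncard_le_rk (union_subset (sdiff_subset.trans hB₁.subset_ground)
      (hTB₂.trans hB₂.subset_ground)) (by omega))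
    (hB₁.spanning_of_ncard_le_rk (union_subset (hA₁.trans hB₁.subset_ground)
      (sdiff_subset.trans hB₂.subset_ground)) (by omega))
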